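/- arXiv:2302.06021 — 7 statements merged into one kernel-verified Lean document; each statement's English description precedes it below -/
import Mathlib

section
/- Let G be a finite connected simple graph on n ≥ 2 vertices whose resistance curvature satisfies κ_i ≥ K for all vertices i, for some K > 0. Then every nonzero eigenvalue λ of the Laplacian matrix L = D − A satisfies λ ≥ 2K; in particular the smallest positive eigenvalue λ₂ of L satisfies λ₂ ≥ 2K. -/
/-!
The matrix `Γ = L + J/n` is positive semidefinite, hence so is `Γ⁻¹`, and therefore every entry
`Ω i j = (e_i - e_j)ᵀ Γ⁻¹ (e_i - e_j)` is nonnegative. An eigenvector `v` of `L` with eigenvalue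
`μ ≠ 0` sums to zero, so it is an eigenvector of `Γ⁻¹` with eigenvalue `μ⁻¹`, and
`Ω v = c - (2/μ) v` for a constant `c`. Since `Ω ≥ 0` and `Ω κ = 1`, the entrywise bounds
`(min v / K) κ ≤ v ≤ (max v / K) κ` give `(Ω v) i ≥ min v / K` and `(Ω v) i ≤ max v / K`;
evaluating at a maximum and a minimum of `v` and subtracting gives
`(2/μ) (max v - min v) ≤ (max v - min v) / K`.
-/

open Finset SimpleGraph Matrix

/-- The resistance matrix of a graph: `Ω i j = Γ⁻¹ i i + Γ⁻¹ j j - 2 Γ⁻¹ i j`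
where `Γ = L + (1/n) J` with `L` the Laplacian and `J` the all-ones matrix. -/
noncomputable def resistanceMatrix {V : Type*} [Fintype V] [DecidableEq V]
    (G : SimpleGraph V) [DecidableRel G.Adj] : Matrix V V ℝ :=
  Matrix.of fun i j =>
    letI Γinv := (G.lapMatrix ℝ + Matrix.of fun _ _ => (1 : ℝ) / Fintype.card V)⁻¹
    Γinv i i + Γinv j j - 2 * Γinv i j

namespace Matrix

variable {n : Type*} [Fintype n]

lemma PosSemidef.nonneg_of_mulVec_eq_smul {A : Matrix n n ℝ} (hA : A.PosSemidef) {v : n → ℝ}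
    {μ : ℝ} (hv : v ≠ 0) (hev : A *ᵥ v = μ • v) : 0 ≤ μ := by
  have hquad : 0 ≤ μ * (v ⬝ᵥ v) := by
    simpa [hev, dotProduct_smul] using hA.dotProduct_mulVec_nonneg v
  have hvv : 0 < v ⬝ᵥ v := by simpa using dotProduct_star_self_pos_iff.mpr hv
  exact nonneg_of_mul_nonneg_left hquad hvv

lemma PosSemidef.two_mul_apply_le_add_diag [DecidableEq n] {A : Matrix n n ℝ}
    (hA : A.PosSemidef) (i j : n) : 2 * A i j ≤ A i i + A j j := by
  have hsymm : A j i = A i j := by simpa using hA.isHermitian.apply i j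
  have := hA.dotProduct_mulVec_nonneg (Pi.single i 1 - Pi.single j 1)
  simp only [star_trivial, mulVec_sub, mulVec_single_one, sub_dotProduct, dotProduct_sub,
    single_one_dotProduct, col_apply, hsymm] at this
  linarith

protected lemma PosSemidef.const {c : ℝ} (hc : 0 ≤ c) :
    (of fun _ _ => c : Matrix n n ℝ).PosSemidef := by
  convert (posSemidef_vecMulVec_self_star (fun _ : n => (1 : ℝ))).smul hc using 1
  ext i j
  simp [vecMulVec_apply]

lemma of_diag_add_diag_sub_two_mul_mulVec (H : Matrix n n ℝ) {v : n → ℝ} (hv : ∑ i, v i = 0) :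
    (of fun i j => H i i + H j j - 2 * H i j) *ᵥ v = fun i => diag H ⬝ᵥ v - 2 * (H *ᵥ v) i := by
  ext i
  simp only [mulVec, dotProduct, of_apply, diag_apply, sub_mul, add_mul, sum_sub_distrib,
    sum_add_distrib, ← mul_sum, hv, mul_assoc]
  ring

end Matrix

section Curvature

variable {n : Type*} [Fintype n] {Ω : Matrix n n ℝ} {κ : n → ℝ} {K : ℝ}

lemma div_le_mulVec_apply_of_forall_le (hΩ : ∀ i j, 0 ≤ Ω i j) (hκ : Ω *ᵥ κ = fun _ => 1)
    (hK : 0 < K) (hcurv : ∀ j, K ≤ κ j) {w : n → ℝ} {m : ℝ} (hm : m ≤ 0) (hw : ∀ j, m ≤ w j)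
    (i : n) : m / K ≤ (Ω *ᵥ w) i := by
  have hstep : ∀ j, m / K * κ j ≤ w j := fun j =>
    calc m / K * κ j ≤ m / K * K :=
          mul_le_mul_of_nonpos_left (hcurv j) (div_nonpos_of_nonpos_of_nonneg hm hK.le)
      _ = m := div_mul_cancel₀ m hK.ne'
      _ ≤ w j := hw j
  calc m / K = (Ω *ᵥ (m / K) • κ) i := by simp [mulVec_smul, hκ]
    _ ≤ (Ω *ᵥ w) i := sum_le_sum fun j _ => mul_le_mul_of_nonneg_left (hstep j) (hΩ i j)

lemma mulVec_apply_le_div_of_forall_le (hΩ : ∀ i j, 0 ≤ Ω i j) (hκ : Ω *ᵥ κ = fun _ => 1)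
    (hK : 0 < K) (hcurv : ∀ j, K ≤ κ j) {w : n → ℝ} {M : ℝ} (hM : 0 ≤ M) (hw : ∀ j, w j ≤ M)
    (i : n) : (Ω *ᵥ w) i ≤ M / K := by
  have := div_le_mulVec_apply_of_forall_le hΩ hκ hK hcurv (w := -w) (neg_nonpos.mpr hM)
    (fun j => neg_le_neg (hw j)) i
  rw [mulVec_neg, Pi.neg_apply, neg_div] at this
  exact neg_le_neg_iff.mp this

lemma le_inv_of_mulVec_eq_const_sub_smul (hΩ : ∀ i j, 0 ≤ Ω i j) (hκ : Ω *ᵥ κ = fun _ => 1)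
    (hK : 0 < K) (hcurv : ∀ j, K ≤ κ j) {w : n → ℝ} (hw : w ≠ 0) (hsum : ∑ i, w i = 0)
    {c t : ℝ} (hΩw : ∀ i, (Ω *ᵥ w) i = c - t * w i) : t ≤ K⁻¹ := by
  obtain ⟨k, hk⟩ := Function.ne_iff.mp hw
  have : Nonempty n := ⟨k⟩
  obtain ⟨a, ha⟩ := Finite.exists_max w
  obtain ⟨b, hb⟩ := Finite.exists_min w
  have hb0 : w b ≤ 0 := by
    obtain ⟨j, -, hj⟩ := exists_le_of_sum_le univ_nonempty (hsum.trans sum_const_zero.symm).le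
    exact (hb j).trans hj
  have ha0 : 0 ≤ w a := by
    obtain ⟨j, -, hj⟩ := exists_le_of_sum_le univ_nonempty (sum_const_zero.trans hsum.symm).le
    exact hj.trans (ha j)
  have hba : 0 < w a - w b := by
    by_contra! h
    exact hk (le_antisymm (by linarith [ha k]) (by linarith [hb k]) : w k = 0)
  have hlow := div_le_mulVec_apply_of_forall_le hΩ hκ hK hcurv hb0 hb a
  have hup := mulVec_apply_le_div_of_forall_le hΩ hκ hK hcurv ha0 ha b
  rw [hΩw] at hlow hup
  have : t * (w a - w b) ≤ K⁻¹ * (w a - w b) := by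
    rw [div_eq_mul_inv] at hlow hup
    linarith
  exact le_of_mul_le_mul_right this hba

end Curvature

namespace SimpleGraph

variable {V : Type*} [Fintype V] [DecidableEq V] (G : SimpleGraph V) [DecidableRel G.Adj]

noncomputable def regularizedLapMatrix : Matrix V V ℝ :=
  G.lapMatrix ℝ + of fun _ _ => (1 : ℝ) / Fintype.card V

lemma resistanceMatrix_eq :
    resistanceMatrix G = of fun i j => G.regularizedLapMatrix⁻¹ i i +
      G.regularizedLapMatrix⁻¹ j j - 2 * G.regularizedLapMatrix⁻¹ i j :=
  rfl

lemma posSemidef_regularizedLapMatrix : G.regularizedLapMatrix.PosSemidef :=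
  (posSemidef_lapMatrix ℝ G).add (PosSemidef.const (by positivity))

lemma resistanceMatrix_nonneg (i j : V) : 0 ≤ resistanceMatrix G i j := by
  have := G.posSemidef_regularizedLapMatrix.inv.two_mul_apply_le_add_diag i j
  rw [resistanceMatrix_eq, of_apply]
  linarith

/-- `Γ⁻¹ = 0` when `Γ` is singular, and then `Ω = 0`. -/
lemma isUnit_det_regularizedLapMatrix_of_resistanceMatrix_mulVec_eq_one [Nonempty V] {κ : V → ℝ}
    (hκ : resistanceMatrix G *ᵥ κ = fun _ => 1) : IsUnit G.regularizedLapMatrix.det := by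
  by_contra h
  have hzero : resistanceMatrix G = 0 := by
    ext i j
    simp [resistanceMatrix_eq, nonsing_inv_apply_not_isUnit _ h]
  obtain ⟨i⟩ := ‹Nonempty V›
  simpa [hzero] using congrFun hκ i

variable {G}

lemma sum_eq_zero_of_lapMatrix_mulVec_eq_smul {v : V → ℝ} {μ : ℝ}
    (hev : G.lapMatrix ℝ *ᵥ v = μ • v) (hμ : μ ≠ 0) : ∑ i, v i = 0 := by
  have hker : (fun _ => (1 : ℝ)) ᵥ* G.lapMatrix ℝ = 0 := by
    rw [← mulVec_transpose, G.isSymm_lapMatrix (R := ℝ)]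
    exact G.lapMatrix_mulVec_const_eq_zero
  have h := congrArg ((fun _ => (1 : ℝ)) ⬝ᵥ ·) hev
  simp only [dotProduct_mulVec, hker, zero_dotProduct, dotProduct_smul, smul_eq_mul] at h
  simpa [dotProduct, hμ] using h.symm

lemma resistanceMatrix_mulVec_of_lapMatrix_mulVec_eq_smul (hΓ : IsUnit G.regularizedLapMatrix.det)
    {v : V → ℝ} {μ : ℝ} (hev : G.lapMatrix ℝ *ᵥ v = μ • v) (hμ : μ ≠ 0) :
    ∃ c, ∀ i, (resistanceMatrix G *ᵥ v) i = c - 2 * μ⁻¹ * v i := by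
  have hsum := sum_eq_zero_of_lapMatrix_mulVec_eq_smul hev hμ
  have hΓv : G.regularizedLapMatrix *ᵥ v = μ • v := by
    have hJv : (of fun _ _ => (1 : ℝ) / Fintype.card V : Matrix V V ℝ) *ᵥ v = 0 := by
      ext i
      simp [mulVec, dotProduct, ← mul_sum, hsum]
    rw [regularizedLapMatrix, add_mulVec, hev, hJv, add_zero]
  have hinv : G.regularizedLapMatrix⁻¹ *ᵥ v = μ⁻¹ • v := by
    rw [eq_inv_smul_iff₀ hμ, ← mulVec_smul, ← hΓv, mulVec_mulVec, nonsing_inv_mul _ hΓ,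
      one_mulVec]
  refine ⟨diag G.regularizedLapMatrix⁻¹ ⬝ᵥ v, fun i => ?_⟩
  rw [resistanceMatrix_eq, of_diag_add_diag_sub_two_mul_mulVec _ hsum, hinv]
  simp [mul_assoc]

end SimpleGraph

theorem laplacian_eigenvalue_ge_of_resistance_curvature_ge_general
    {V : Type*} [Fintype V] [DecidableEq V]
    (G : SimpleGraph V) [DecidableRel G.Adj]
    (κ : V → ℝ) (hκ : resistanceMatrix G *ᵥ κ = fun _ => 1)
    (K : ℝ) (hK : 0 < K) (hcurv : ∀ i, K ≤ κ i) :
    ∀ (μ : ℝ) (v : V → ℝ), v ≠ 0 → G.lapMatrix ℝ *ᵥ v = μ • v → μ ≠ 0 →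
      2 * K ≤ μ := by
  intro μ v hv hev hμ
  obtain ⟨i, -⟩ := Function.ne_iff.mp hv
  have : Nonempty V := ⟨i⟩
  have hμpos : 0 < μ := ((posSemidef_lapMatrix ℝ G).nonneg_of_mulVec_eq_smul hv hev).lt_of_ne' hμ
  obtain ⟨c, hc⟩ := G.resistanceMatrix_mulVec_of_lapMatrix_mulVec_eq_smul
    (G.isUnit_det_regularizedLapMatrix_of_resistanceMatrix_mulVec_eq_one hκ) hev hμ
  have h := le_inv_of_mulVec_eq_const_sub_smul G.resistanceMatrix_nonneg hκ hK hcurv hv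
    (sum_eq_zero_of_lapMatrix_mulVec_eq_smul hev hμ) hc
  rwa [← div_eq_mul_inv, div_le_iff₀ hμpos, inv_mul_eq_div, le_div_iff₀ hK] at h

/-- Lichnerowicz-type estimate: every nonzero eigenvalue of the Laplacian `L = D - A`
of a graph with resistance curvature bounded below by `K > 0` is at least `2K`. -/
theorem laplacian_eigenvalue_ge_of_resistance_curvature_ge
    {V : Type*} [Fintype V] [DecidableEq V]
    (G : SimpleGraph V) [DecidableRel G.Adj]
    (hconn : G.Connected) (hn : 2 ≤ Fintype.card V)
    (κ : V → ℝ) (hκ : resistanceMatrix G *ᵥ κ = fun _ => 1)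
    (K : ℝ) (hK : 0 < K) (hcurv : ∀ i, K ≤ κ i) :
    ∀ (μ : ℝ) (v : V → ℝ), v ≠ 0 → G.lapMatrix ℝ *ᵥ v = μ • v → μ ≠ 0 →
      2 * K ≤ μ :=
  laplacian_eigenvalue_ge_of_resistance_curvature_ge_general G κ hκ K hK hcurv
end

section
/- Let G be a finite connected simple graph on n ≥ 2 vertices whose resistance curvature satisfies κ_i ≥ K for all vertices i, for some K > 0. Then for every function f : V → ℝ with Σ_{v∈V} f(v) = 0, one has Σ_{(u,v)∈E} (f(u) − f(v))² ≥ 2K Σ_{v∈V} f(v)², where the sum on the left runs over each edge of G once. -/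
open Finset SimpleGraph Matrix

/-!
Write `M = Γ⁻¹`, so that `Ω i j = M i i + M j j - 2 M i j` is entrywise nonnegative. For mean-zero
`f` the diagonal terms cancel and `fᵀ Ω f = -2 fᵀ M f`; pairing `Ω ≥ 0` with `Ω κ = 1` gives
`fᵀ Ω f ≥ -∑ fᵢ² / κᵢ ≥ -‖f‖² / K`, hence `2K fᵀ M f ≤ ‖f‖²`. Cauchy–Schwarz for the inner product
`M` applied to `f` and `Γ f` gives `‖f‖⁴ ≤ fᵀ M f · fᵀ Γ f`, and `fᵀ Γ f = fᵀ L f` since `∑ f = 0`.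
-/

namespace Matrix

variable {n R : Type*} [CommRing R]

/-- If `M` is the Gram matrix of vectors `xᵢ`, then `M.gramSqDist i j = ‖xᵢ - xⱼ‖²`. -/
def gramSqDist (M : Matrix n n R) : Matrix n n R :=
  of fun i j => M i i + M j j - 2 * M i j

theorem IsSymm.gramSqDist {M : Matrix n n R} (hM : M.IsSymm) : M.gramSqDist.IsSymm := by
  refine IsSymm.ext fun i j => ?_
  simp only [Matrix.gramSqDist, of_apply, hM.apply i j]
  ring

variable [Fintype n]

theorem dotProduct_gramSqDist_mulVec (M : Matrix n n R) {f : n → R} (hf : ∑ i, f i = 0) :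
    f ⬝ᵥ (M.gramSqDist *ᵥ f) = -2 * (f ⬝ᵥ (M *ᵥ f)) := by
  have hleft : ∑ i, ∑ j, f i * (M i i * f j) = 0 := by
    simp only [← mul_sum, hf, mul_zero, sum_const_zero]
  have hright : ∑ i, ∑ j, f i * (M j j * f j) = 0 := by
    rw [← sum_mul_sum, hf, zero_mul]
  simp only [dotProduct, mulVec, Matrix.gramSqDist, of_apply, mul_sum, add_mul, sub_mul, mul_add,
    mul_sub, sum_add_distrib, sum_sub_distrib, hleft, hright, zero_add, zero_sub,
    ← sum_neg_distrib]
  ring_nf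

theorem PosSemidef.gramSqDist_nonneg [DecidableEq n] {M : Matrix n n ℝ} (hM : M.PosSemidef)
    (i j : n) : 0 ≤ M.gramSqDist i j := by
  have h := hM.dotProduct_mulVec_nonneg (Pi.single i 1 - Pi.single j 1)
  have hsymm : M j i = M i j := (isHermitian_iff_isSymm.1 hM.isHermitian).apply i j
  simp only [star_trivial, mulVec_sub, mulVec_single, MulOpposite.op_one, one_smul,
    dotProduct_sub, sub_dotProduct, single_dotProduct, col_apply, one_mul, hsymm] at h
  simp only [Matrix.gramSqDist, of_apply]
  linarith

-- Expand `∑ᵢⱼ Ω i j (κ j fᵢ + κ i fⱼ)² / (κ i κ j) ≥ 0`; `Ω κ = 1` collapses the square terms.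
theorem neg_sum_sq_div_le_dotProduct_mulVec {Ω : Matrix n n ℝ} (hΩ : Ω.IsSymm)
    (hnonneg : ∀ i j, 0 ≤ Ω i j) {κ : n → ℝ} (hκ : ∀ i, 0 < κ i)
    (hΩκ : Ω *ᵥ κ = fun _ => 1) (f : n → ℝ) :
    -∑ i, f i ^ 2 / κ i ≤ f ⬝ᵥ (Ω *ᵥ f) := by
  have hleft : ∑ i, ∑ j, Ω i j * (κ j * f i ^ 2 / κ i) = ∑ i, f i ^ 2 / κ i := by
    refine sum_congr rfl fun i _ => ?_
    have hrow : ∑ j, Ω i j * κ j = 1 := congrFun hΩκ i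
    simp only [← mul_assoc, mul_div_assoc, ← sum_mul, hrow, one_mul]
  have hright : ∑ i, ∑ j, Ω i j * (κ i * f j ^ 2 / κ j) = ∑ i, f i ^ 2 / κ i := by
    rw [sum_comm, ← hleft]
    simp only [hΩ.apply]
  have hsq : 0 ≤ ∑ i, ∑ j,
      Ω i j * (κ j * f i ^ 2 / κ i + κ i * f j ^ 2 / κ j + 2 * (f i * f j)) := by
    refine sum_nonneg fun i _ => sum_nonneg fun j _ => mul_nonneg (hnonneg i j) ?_
    have hκi := (hκ i).ne'
    have hκj := (hκ j).ne'
    have hexpand : κ j * f i ^ 2 / κ i + κ i * f j ^ 2 / κ j + 2 * (f i * f j)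
        = (κ j * f i + κ i * f j) ^ 2 / (κ i * κ j) := by
      field_simp
      ring
    rw [hexpand]
    exact div_nonneg (sq_nonneg _) (mul_pos (hκ i) (hκ j)).le
  have hquad : f ⬝ᵥ (Ω *ᵥ f) = ∑ i, ∑ j, Ω i j * (f i * f j) := by
    simp only [dotProduct, mulVec, mul_sum]
    exact sum_congr rfl fun i _ => sum_congr rfl fun j _ => by ring
  simp only [mul_add, sum_add_distrib, hleft, hright, mul_left_comm _ (2 : ℝ), ← mul_sum,
    ← hquad] at hsq
  linarith

-- Cauchy–Schwarz for the inner product `Γ⁻¹` applied to `f` and `Γ f`.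
theorem PosDef.sq_dotProduct_le [DecidableEq n] {Γ : Matrix n n ℝ} (hΓ : Γ.PosDef) (f : n → ℝ) :
    (f ⬝ᵥ f) ^ 2 ≤ (f ⬝ᵥ (Γ⁻¹ *ᵥ f)) * (f ⬝ᵥ (Γ *ᵥ f)) := by
  have hunit : IsUnit Γ.det := hΓ.det_pos.ne'.isUnit
  have hsymm : Γ.IsSymm := isHermitian_iff_isSymm.1 hΓ.isHermitian
  have hpair : ∀ w, (Γ *ᵥ f) ⬝ᵥ (Γ⁻¹ *ᵥ w) = f ⬝ᵥ w := fun w => by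
    rw [← vecMul_transpose, ← dotProduct_mulVec, hsymm.eq, mulVec_mulVec,
      mul_nonsing_inv _ hunit, one_mulVec]
  have hinvΓ : Γ⁻¹ *ᵥ (Γ *ᵥ f) = f := by
    rw [mulVec_mulVec, nonsing_inv_mul _ hunit, one_mulVec]
  have hquad : ∀ x : ℝ, (x • (Γ *ᵥ f) + f) ⬝ᵥ (Γ⁻¹ *ᵥ (x • (Γ *ᵥ f) + f))
      = (f ⬝ᵥ (Γ *ᵥ f)) * (x * x) + 2 * (f ⬝ᵥ f) * x + f ⬝ᵥ (Γ⁻¹ *ᵥ f) := fun x => by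
    rw [mulVec_add, mulVec_smul, hinvΓ, dotProduct_add, add_dotProduct, add_dotProduct,
      smul_dotProduct, smul_dotProduct, dotProduct_smul, hpair, dotProduct_comm (Γ *ᵥ f) f,
      dotProduct_smul]
    simp only [smul_eq_mul]
    ring
  have hdiscrim := discrim_le_zero fun x => hquad x ▸ hΓ.inv.posSemidef.dotProduct_mulVec_nonneg _
  rw [discrim] at hdiscrim
  linarith

theorem PosDef.mul_dotProduct_self_le_of_mul_inv_le [DecidableEq n] {Γ : Matrix n n ℝ}
    (hΓ : Γ.PosDef) {c : ℝ} {f : n → ℝ} (h : c * (f ⬝ᵥ (Γ⁻¹ *ᵥ f)) ≤ f ⬝ᵥ f) :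
    c * (f ⬝ᵥ f) ≤ f ⬝ᵥ (Γ *ᵥ f) := by
  have hΓf : 0 ≤ f ⬝ᵥ (Γ *ᵥ f) := by simpa using hΓ.posSemidef.dotProduct_mulVec_nonneg f
  have hff : 0 ≤ f ⬝ᵥ f := by simpa using dotProduct_self_star_nonneg f
  rcases hff.eq_or_lt with hff | hff
  · rw [← hff, mul_zero]
    exact hΓf
  rcases le_or_gt c 0 with hc | hc
  · exact (mul_nonpos_of_nonpos_of_nonneg hc hff.le).trans hΓf
  refine le_of_mul_le_mul_left ?_ hff
  calc f ⬝ᵥ f * (c * (f ⬝ᵥ f)) = c * (f ⬝ᵥ f) ^ 2 := by ring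
    _ ≤ c * ((f ⬝ᵥ (Γ⁻¹ *ᵥ f)) * (f ⬝ᵥ (Γ *ᵥ f))) :=
        mul_le_mul_of_nonneg_left (hΓ.sq_dotProduct_le f) hc.le
    _ = c * (f ⬝ᵥ (Γ⁻¹ *ᵥ f)) * (f ⬝ᵥ (Γ *ᵥ f)) := by ring
    _ ≤ f ⬝ᵥ f * (f ⬝ᵥ (Γ *ᵥ f)) := mul_le_mul_of_nonneg_right h hΓf

end Matrix

namespace SimpleGraph

variable {V : Type*} [Fintype V] (G : SimpleGraph V) [DecidableRel G.Adj]

theorem sum_dart_edge_eq_two_nsmul [DecidableEq V] {M : Type*} [AddCommMonoid M]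
    (g : Sym2 V → M) :
    ∑ d : G.Dart, g d.edge = 2 • ∑ e ∈ G.edgeFinset, g e := by
  rw [← sum_fiberwise_of_maps_to (t := G.edgeFinset) (g := Dart.edge)
    fun d _ => mem_edgeFinset.2 d.edge_mem, smul_sum]
  refine sum_congr rfl fun e he => ?_
  rw [sum_congr rfl fun d hd => congrArg g (mem_filter.1 hd).2, sum_const,
    G.dart_edge_fiber_card e (mem_edgeFinset.1 he)]

theorem sum_dart_eq_sum_adj {M : Type*} [AddCommMonoid M] (g : V → V → M) :
    ∑ d : G.Dart, g d.fst d.snd = ∑ i, ∑ j, if G.Adj i j then g i j else 0 := by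
  rw [← Fintype.sum_prod_type', ← sum_filter]
  exact sum_bij' (fun d _ => d.toProd) (fun p hp => ⟨p, (mem_filter.1 hp).2⟩)
    (fun d _ => mem_filter.2 ⟨mem_univ _, d.adj⟩) (fun _ _ => mem_univ _)
    (fun _ _ => rfl) (fun _ _ => rfl) (fun _ _ => rfl)

variable [DecidableEq V]

theorem sum_edgeFinset_sq_sub_eq_dotProduct_lapMatrix_mulVec {R : Type*} [Field R] [CharZero R]
    (f : V → R) :
    ∑ e ∈ G.edgeFinset, Sym2.lift ⟨fun u v => (f u - f v) ^ 2, fun u v => by ring⟩ e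
      = f ⬝ᵥ (G.lapMatrix R *ᵥ f) :=
  calc _ = (∑ d : G.Dart,
          Sym2.lift ⟨fun u v => (f u - f v) ^ 2, fun u v => by ring⟩ d.edge) / 2 := by
        rw [sum_dart_edge_eq_two_nsmul, two_nsmul, add_self_div_two]
    _ = (∑ i, ∑ j, if G.Adj i j then (f i - f j) ^ 2 else 0) / 2 := by
        rw [← sum_dart_eq_sum_adj]
        rfl
    _ = f ⬝ᵥ (G.lapMatrix R *ᵥ f) := by rw [← lapMatrix_toLinearMap₂', toLinearMap₂'_apply']

theorem dotProduct_lapMatrix_add_const_mulVec (c : ℝ) (f : V → ℝ) :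
    f ⬝ᵥ ((G.lapMatrix ℝ + of fun _ _ => c) *ᵥ f)
      = f ⬝ᵥ (G.lapMatrix ℝ *ᵥ f) + c * (∑ v, f v) ^ 2 := by
  rw [add_mulVec, dotProduct_add]
  congr 1
  simp only [dotProduct, mulVec, of_apply, ← mul_sum, ← sum_mul]
  ring

-- The Laplacian form vanishes exactly on the constants, which the rank-one term detects.
theorem posDef_lapMatrix_add_const (hconn : G.Connected) {c : ℝ} (hc : 0 < c) :
    (G.lapMatrix ℝ + of fun _ _ => c).PosDef := by
  refine .of_dotProduct_mulVec_pos ((isHermitian_lapMatrix ℝ G).add (ext fun _ _ => rfl))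
    fun f hf => ?_
  rw [star_trivial, dotProduct_lapMatrix_add_const_mulVec]
  have hL : 0 ≤ f ⬝ᵥ (G.lapMatrix ℝ *ᵥ f) := by
    simpa using (posSemidef_lapMatrix ℝ G).dotProduct_mulVec_nonneg f
  rcases hL.lt_or_eq with hL | hL
  · positivity
  obtain ⟨v₀⟩ := hconn.nonempty
  have hconst : ∀ v, f v = f v₀ := fun v =>
    (lapMatrix_toLinearMap₂'_apply'_eq_zero_iff_forall_reachable G f).1
      (by rw [toLinearMap₂'_apply', ← hL]) _ _ (hconn.preconnected v v₀)
  have hf₀ : f v₀ ≠ 0 := fun h₀ => hf (funext fun v => (hconst v).trans h₀)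
  have hcard : (0 : ℝ) < Fintype.card V := by exact_mod_cast Fintype.card_pos_iff.2 ⟨v₀⟩
  rw [← hL, zero_add, sum_congr rfl fun v _ => hconst v, sum_const, card_univ, nsmul_eq_mul]
  positivity

end SimpleGraph

theorem resistanceMatrix_eq_gramSqDist {V : Type*} [Fintype V] [DecidableEq V]
    (G : SimpleGraph V) [DecidableRel G.Adj] :
    resistanceMatrix G
      = (G.lapMatrix ℝ + of fun _ _ => (1 : ℝ) / Fintype.card V)⁻¹.gramSqDist :=
  rfl

/-- Functional form of the Lichnerowicz estimate: for every mean-zero function `f`,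
the sum over edges of `(f u - f v)²` is at least `2K ∑ f²`. -/
theorem edge_sum_sq_ge_of_resistance_curvature_ge
    {V : Type*} [Fintype V] [DecidableEq V]
    (G : SimpleGraph V) [DecidableRel G.Adj]
    (hconn : G.Connected)
    (κ : V → ℝ) (hκ : resistanceMatrix G *ᵥ κ = fun _ => 1)
    (K : ℝ) (hK : 0 < K) (hcurv : ∀ i, K ≤ κ i)
    (f : V → ℝ) (hf : ∑ v, f v = 0) :
    ∑ e ∈ G.edgeFinset,
        Sym2.lift ⟨fun u v => (f u - f v) ^ 2, fun u v => by ring⟩ e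
      ≥ 2 * K * ∑ v, f v ^ 2 := by
  have := hconn.nonempty
  rw [resistanceMatrix_eq_gramSqDist] at hκ
  set Γ := G.lapMatrix ℝ + of fun _ _ => (1 : ℝ) / Fintype.card V
  have hΓ : Γ.PosDef := G.posDef_lapMatrix_add_const hconn (by positivity)
  have hΓinv : Γ⁻¹.PosSemidef := hΓ.inv.posSemidef
  have hΩ := neg_sum_sq_div_le_dotProduct_mulVec
    (isHermitian_iff_isSymm.1 hΓinv.isHermitian).gramSqDist hΓinv.gramSqDist_nonneg
    (fun i => hK.trans_le (hcurv i)) hκ f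
  rw [dotProduct_gramSqDist_mulVec _ hf] at hΩ
  have hκK : ∑ v, f v ^ 2 / κ v ≤ (∑ v, f v ^ 2) / K := by
    rw [sum_div]
    gcongr with v
    exact hcurv v
  have hsq : f ⬝ᵥ f = ∑ v, f v ^ 2 := by simp only [dotProduct, sq]
  have hinv : 2 * K * (f ⬝ᵥ (Γ⁻¹ *ᵥ f)) ≤ f ⬝ᵥ f := by
    rw [hsq, mul_right_comm, ← le_div_iff₀ hK]
    linarith
  have hΓL : f ⬝ᵥ (Γ *ᵥ f) = f ⬝ᵥ (G.lapMatrix ℝ *ᵥ f) := by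
    rw [G.dotProduct_lapMatrix_add_const_mulVec, hf]
    ring
  rw [G.sum_edgeFinset_sq_sub_eq_dotProduct_lapMatrix_mulVec, ← hΓL, ← hsq]
  exact hΓ.mul_dotProduct_self_le_of_mul_inv_le hinv
end

section
/- Let G be a finite connected simple graph on n ≥ 2 vertices whose resistance curvature satisfies κ_i ≥ K for all vertices i, for some K > 0. Then for all vertices y, z one has Ω_{yz} ≤ 2/(K·n). Equivalently, the maximal commute time of the simple random walk, which equals 2·|E|·Ω_{yz}, is at most (4/K)·(|E|/n). -/
open Finset SimpleGraph Matrix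

/-!
The matrix `Γ = L + J/n` preserves coordinate sums and agrees with `L` on mean-zero vectors, so
`f = Γ⁻¹ (e_j - e_z)` solves `L f = e_j - e_z`. By the maximum principle for `L`, `f` peaks at `j`;
written out in entries of the symmetric matrix `Γ⁻¹`, `f y ≤ f j` is the triangle inequality
`Ω y z ≤ Ω y j + Ω j z`. Averaging `Ω y z ≤ Ω y i + Ω i z` against the weights `κ i ≥ K > 0` gives
`Ω y z · ∑ κ ≤ (Ω κ) y + (Ω κ) z = 2`, while `∑ κ ≥ K n`.
-/

section Pseudometric

variable {ι : Type*} [Fintype ι] {d : Matrix ι ι ℝ} {κ : ι → ℝ}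

theorem mul_sum_le_two_of_mulVec_eq_one (hsymm : d.IsSymm)
    (htri : ∀ x y z, d x z ≤ d x y + d y z) (hκ : d *ᵥ κ = fun _ => 1) (hκ0 : ∀ i, 0 ≤ κ i)
    (y z : ι) : d y z * ∑ i, κ i ≤ 2 :=
  calc d y z * ∑ i, κ i = ∑ i, d y z * κ i := mul_sum _ _ _
    _ ≤ ∑ i, (d y i * κ i + d z i * κ i) := by
        gcongr with i
        rw [← add_mul, hsymm.apply i z]
        exact mul_le_mul_of_nonneg_right (htri y i z) (hκ0 i)
    _ = (d *ᵥ κ) y + (d *ᵥ κ) z := by simp only [mulVec, dotProduct, sum_add_distrib]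
    _ = 2 := by rw [hκ]; norm_num

theorem le_two_div_of_mulVec_eq_one (hsymm : d.IsSymm) (htri : ∀ x y z, d x z ≤ d x y + d y z)
    (hdiag : ∀ i, d i i = 0) (hκ : d *ᵥ κ = fun _ => 1) {K : ℝ} (hK : 0 < K)
    (hκK : ∀ i, K ≤ κ i) (y z : ι) : d y z ≤ 2 / (K * Fintype.card ι) := by
  have hnonneg : 0 ≤ d y z := by linarith [htri y z y, hdiag y, hsymm.apply y z]
  have hsum : K * Fintype.card ι ≤ ∑ i, κ i := by
    simpa [mul_comm] using card_nsmul_le_sum univ κ K fun i _ => hκK i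
  have : Nonempty ι := ⟨y⟩
  rw [le_div_iff₀ (by positivity)]
  calc d y z * (K * Fintype.card ι) ≤ d y z * ∑ i, κ i := mul_le_mul_of_nonneg_left hsum hnonneg
    _ ≤ 2 := mul_sum_le_two_of_mulVec_eq_one hsymm htri hκ (fun i => hK.le.trans (hκK i)) y z

end Pseudometric

namespace SimpleGraph

variable {V : Type*} [Fintype V] [DecidableEq V] (G : SimpleGraph V) [DecidableRel G.Adj]

noncomputable def gammaMatrix : Matrix V V ℝ :=
  G.lapMatrix ℝ + Matrix.of fun _ _ => (1 : ℝ) / Fintype.card V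

theorem gammaMatrix_isSymm : G.gammaMatrix.IsSymm :=
  (isSymm_lapMatrix ℝ G).add (IsSymm.ext fun _ _ => rfl)

theorem sum_lapMatrix_mulVec (x : V → ℝ) : ∑ i, (G.lapMatrix ℝ *ᵥ x) i = 0 := by
  rw [← one_dotProduct, dotProduct_mulVec, ← mulVec_transpose, (isSymm_lapMatrix ℝ G).eq]
  exact (congrArg (· ⬝ᵥ x) (G.lapMatrix_mulVec_const_eq_zero (R := ℝ))).trans (zero_dotProduct x)

theorem gammaMatrix_mulVec (f : V → ℝ) :
    G.gammaMatrix *ᵥ f = G.lapMatrix ℝ *ᵥ f + fun _ => (∑ i, f i) / Fintype.card V := by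
  ext a
  rw [gammaMatrix, add_mulVec]
  simp [mulVec, dotProduct, ← mul_sum, div_eq_inv_mul]

theorem sum_gammaMatrix_mulVec [Nonempty V] (f : V → ℝ) :
    ∑ i, (G.gammaMatrix *ᵥ f) i = ∑ i, f i := by
  simp [gammaMatrix_mulVec, sum_add_distrib, sum_lapMatrix_mulVec, mul_div_cancel₀]

variable {G}

theorem eq_zero_of_gammaMatrix_mulVec_eq_zero (hconn : G.Connected) {f : V → ℝ}
    (hf : G.gammaMatrix *ᵥ f = 0) : f = 0 := by
  have := hconn.nonempty
  have hsum : ∑ i, f i = 0 := by rw [← G.sum_gammaMatrix_mulVec, hf]; simp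
  have hL : G.lapMatrix ℝ *ᵥ f = 0 := by
    rw [gammaMatrix_mulVec, hsum, zero_div] at hf
    exact (add_zero _).symm.trans hf
  have hconst : ∀ i j, f i = f j := fun i j =>
    G.lapMatrix_mulVec_eq_zero_iff_forall_reachable.mp hL i j (hconn i j)
  ext i
  have : (Fintype.card V : ℝ) * f i = 0 := by
    rw [← hsum, sum_congr rfl fun j _ => hconst j i]
    simp
  simpa using this

theorem isUnit_gammaMatrix (hconn : G.Connected) : IsUnit G.gammaMatrix := by
  refine mulVec_injective_iff_isUnit.mp fun f g hfg => sub_eq_zero.mp ?_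
  exact eq_zero_of_gammaMatrix_mulVec_eq_zero hconn (by rw [mulVec_sub, hfg, sub_self])

theorem gammaMatrix_mulVec_inv_mulVec (hconn : G.Connected) (v : V → ℝ) :
    G.gammaMatrix *ᵥ (G.gammaMatrix⁻¹ *ᵥ v) = v := by
  rw [mulVec_mulVec, mul_nonsing_inv _ ((isUnit_iff_isUnit_det _).mp (isUnit_gammaMatrix hconn)),
    one_mulVec]

theorem lapMatrix_mulVec_inv_gammaMatrix_mulVec (hconn : G.Connected) {v : V → ℝ}
    (hv : ∑ i, v i = 0) : G.lapMatrix ℝ *ᵥ (G.gammaMatrix⁻¹ *ᵥ v) = v := by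
  have := hconn.nonempty
  have hsum : ∑ i, (G.gammaMatrix⁻¹ *ᵥ v) i = 0 := by
    rw [← G.sum_gammaMatrix_mulVec, gammaMatrix_mulVec_inv_mulVec hconn, hv]
  have h := gammaMatrix_mulVec_inv_mulVec hconn v
  rw [gammaMatrix_mulVec, hsum, zero_div] at h
  exact (add_zero _).symm.trans h

theorem apply_eq_of_adj_of_lapMatrix_mulVec_nonpos {f : V → ℝ} {a b : V}
    (hmax : ∀ c, f c ≤ f a) (hL : (G.lapMatrix ℝ *ᵥ f) a ≤ 0) (hab : G.Adj a b) :
    f b = f a := by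
  have hterms : ∀ c ∈ G.neighborFinset a, 0 ≤ f a - f c := fun c _ => sub_nonneg.mpr (hmax c)
  have hsum : ∑ c ∈ G.neighborFinset a, (f a - f c) = 0 := by
    refine le_antisymm ?_ (sum_nonneg hterms)
    rwa [sum_sub_distrib, sum_const, card_neighborFinset_eq_degree, nsmul_eq_mul,
      ← lapMatrix_mulVec_apply]
  linarith [(sum_eq_zero_iff_of_nonneg hterms).mp hsum b ((G.mem_neighborFinset a b).mpr hab)]

theorem le_of_forall_ne_lapMatrix_mulVec_nonpos (hconn : G.Connected) {f : V → ℝ} {j : V}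
    (hf : ∀ a ≠ j, (G.lapMatrix ℝ *ᵥ f) a ≤ 0) (y : V) : f y ≤ f j := by
  by_contra! hjy
  obtain ⟨x, -, hx⟩ := exists_max_image univ f (univ_nonempty_iff.mpr ⟨y⟩)
  -- `f j < f y` keeps `j` from being a maximiser, so the maximum propagates along every walk.
  have hmax : ∀ {a c : V}, G.Walk a c → f a = f x → f c = f x := by
    intro a c w
    induction w with
    | nil => exact id
    | @cons a _ _ hadj _ ih =>
      intro ha
      have hne : a ≠ j := by rintro rfl; linarith [hx y (mem_univ y)]
      exact ih ((apply_eq_of_adj_of_lapMatrix_mulVec_nonpos (fun c => ha ▸ hx c (mem_univ c))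
        (hf _ hne) hadj).trans ha)
  obtain ⟨w⟩ := hconn x j
  linarith [hmax w rfl, hx y (mem_univ y)]

theorem inv_gammaMatrix_sub_le (hconn : G.Connected) (y j z : V) :
    G.gammaMatrix⁻¹ y j - G.gammaMatrix⁻¹ y z ≤ G.gammaMatrix⁻¹ j j - G.gammaMatrix⁻¹ j z := by
  set f := G.gammaMatrix⁻¹ *ᵥ (Pi.single j 1 - Pi.single z 1) with hf
  have hLf : G.lapMatrix ℝ *ᵥ f = Pi.single j 1 - Pi.single z 1 :=
    lapMatrix_mulVec_inv_gammaMatrix_mulVec hconn (by simp [sum_sub_distrib])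
  have hfa : ∀ a, f a = G.gammaMatrix⁻¹ a j - G.gammaMatrix⁻¹ a z := fun a => by
    simp [hf, mulVec_sub]
  have hsub : ∀ a ≠ j, (G.lapMatrix ℝ *ᵥ f) a ≤ 0 := fun a ha => by
    rw [hLf, Pi.sub_apply, Pi.single_eq_of_ne ha, zero_sub, neg_nonpos]
    exact (Pi.single_nonneg (α := fun _ : V => ℝ) (i := z)).mpr zero_le_one a
  simpa only [hfa] using le_of_forall_ne_lapMatrix_mulVec_nonpos hconn hsub y

variable (G)

theorem resistanceMatrix_apply (i j : V) : resistanceMatrix G i j =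
    G.gammaMatrix⁻¹ i i + G.gammaMatrix⁻¹ j j - 2 * G.gammaMatrix⁻¹ i j :=
  rfl

theorem resistanceMatrix_self (i : V) : resistanceMatrix G i i = 0 := by
  rw [resistanceMatrix_apply]; ring

theorem resistanceMatrix_isSymm : (resistanceMatrix G).IsSymm :=
  IsSymm.ext fun i j => by
    rw [resistanceMatrix_apply, resistanceMatrix_apply, G.gammaMatrix_isSymm.inv.apply i j]
    ring

variable {G}

theorem resistanceMatrix_le_add (hconn : G.Connected) (x y z : V) :
    resistanceMatrix G x z ≤ resistanceMatrix G x y + resistanceMatrix G y z := by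
  have hsymm := G.gammaMatrix_isSymm.inv.apply
  simp only [resistanceMatrix_apply]
  linarith [inv_gammaMatrix_sub_le hconn x y z, hsymm x y]

end SimpleGraph

theorem commute_time_le_of_resistance_curvature_ge_general
    {V : Type*} [Fintype V] [DecidableEq V]
    (G : SimpleGraph V) [DecidableRel G.Adj]
    (hconn : G.Connected)
    (κ : V → ℝ) (hκ : resistanceMatrix G *ᵥ κ = fun _ => 1)
    (K : ℝ) (hK : 0 < K) (hcurv : ∀ i, K ≤ κ i) :
    ∀ y z : V,
      resistanceMatrix G y z ≤ 2 / (K * Fintype.card V) ∧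
      2 * G.edgeFinset.card * resistanceMatrix G y z ≤
        (4 / K) * (G.edgeFinset.card / (Fintype.card V : ℝ)) := by
  intro y z
  have hΩ : resistanceMatrix G y z ≤ 2 / (K * Fintype.card V) :=
    le_two_div_of_mulVec_eq_one (resistanceMatrix_isSymm G) (resistanceMatrix_le_add hconn)
      (resistanceMatrix_self G) hκ hK hcurv y z
  refine ⟨hΩ, ?_⟩
  calc 2 * (G.edgeFinset.card : ℝ) * resistanceMatrix G y z
      ≤ 2 * G.edgeFinset.card * (2 / (K * Fintype.card V)) := by gcongr
    _ = (4 / K) * (G.edgeFinset.card / (Fintype.card V : ℝ)) := by ring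

/-- Commute time upper bound: if the resistance curvature is bounded below by `K > 0`,
then `Ω y z ≤ 2/(K n)` for all vertices, i.e. every commute time `2 |E| Ω y z`
is at most `(4/K)(|E|/n)`. -/
theorem commute_time_le_of_resistance_curvature_ge
    {V : Type*} [Fintype V] [DecidableEq V]
    (G : SimpleGraph V) [DecidableRel G.Adj]
    (hconn : G.Connected) (hn : 2 ≤ Fintype.card V)
    (κ : V → ℝ) (hκ : resistanceMatrix G *ᵥ κ = fun _ => 1)
    (K : ℝ) (hK : 0 < K) (hcurv : ∀ i, K ≤ κ i) :
    ∀ y z : V,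
      resistanceMatrix G y z ≤ 2 / (K * Fintype.card V) ∧
      2 * G.edgeFinset.card * resistanceMatrix G y z ≤
        (4 / K) * (G.edgeFinset.card / (Fintype.card V : ℝ)) :=
  commute_time_le_of_resistance_curvature_ge_general G hconn κ hκ K hK hcurv
end

section
/- Let G be a finite connected simple graph on n ≥ 2 vertices whose resistance curvature satisfies κ_i ≥ 0 for all vertices i and Σ_{v∈V} κ_v > 0. Then for every vertex x there exists a vertex y with Ω_{xy} ≥ 1/(Σ_{v∈V} κ_v); equivalently max_y commute(x,y) ≥ 2·|E|/(Σ_{v∈V} κ_v), where commute(x,y) = 2·|E|·Ω_{xy}. -/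
open Finset SimpleGraph Matrix

/-- Refined commute time lower bound in terms of the total curvature: if the curvature
is nonnegative with positive sum, then for every vertex `x` there is a vertex `y` with
`Ω x y ≥ 1/(∑ κ)`, i.e. commute time `2 |E| Ω x y ≥ 2 |E| / (∑ κ)`. -/
theorem exists_commute_time_ge_inv_total_curvature
    {V : Type*} [Fintype V] [DecidableEq V]
    (G : SimpleGraph V) [DecidableRel G.Adj]
    (hconn : G.Connected) (hn : 2 ≤ Fintype.card V)
    (κ : V → ℝ) (hκ : resistanceMatrix G *ᵥ κ = fun _ => 1)
    (hcurv : ∀ i, 0 ≤ κ i) (hsum : 0 < ∑ v, κ v) :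
    ∀ x : V, ∃ y : V,
      resistanceMatrix G x y ≥ 1 / (∑ v, κ v) ∧
      2 * G.edgeFinset.card * resistanceMatrix G x y ≥
        2 * G.edgeFinset.card / (∑ v, κ v) := by
  intro x
  set S := ∑ v, κ v with hS
  have hrow : ∑ y, resistanceMatrix G x y * κ y = 1 := by
    have := congrFun hκ x
    simpa [Matrix.mulVec, dotProduct] using this
  by_contra h
  push_neg at h
  -- every y fails; in particular every Ω x y < 1/S
  have hlt : ∀ y, resistanceMatrix G x y < 1 / S := by
    intro y
    by_contra hy
    push_neg at hy
    have h2 := h y hy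
    rw [div_le_iff₀ hsum] at hy
    rw [lt_div_iff₀ hsum] at h2
    nlinarith [Nat.cast_nonneg (α := ℝ) G.edgeFinset.card]
  -- some κ y₀ > 0
  obtain ⟨y₀, hy₀⟩ : ∃ y, 0 < κ y := by
    by_contra hno
    push_neg at hno
    have : S ≤ 0 := Finset.sum_nonpos fun v _ => hno v
    linarith
  have hsumlt : ∑ y, resistanceMatrix G x y * κ y < ∑ y : V, (1 / S) * κ y := by
    apply Finset.sum_lt_sum
    · intro i _
      exact mul_le_mul_of_nonneg_right (le_of_lt (hlt i)) (hcurv i)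
    · exact ⟨y₀, Finset.mem_univ y₀, by
        exact mul_lt_mul_of_pos_right (hlt y₀) hy₀⟩
  rw [hrow, ← Finset.mul_sum, ← hS, one_div, inv_mul_cancel₀ (ne_of_gt hsum)] at hsumlt
  exact lt_irrefl _ hsumlt
end

section
/- Let G be a finite connected simple graph on n ≥ 2 vertices whose resistance curvature is nonnegative (κ_i ≥ 0 for all i) with Σ_{v∈V} κ_v > 0. Then α = 1/(Σ_{v∈V} κ_v) is the unique real number with the property that for every probability measure μ on V one has min_{a∈V} Σ_{v∈V} Ω_{av}·μ(v) ≤ α ≤ max_{b∈V} Σ_{v∈V} Ω_{bv}·μ(v). -/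
open Finset SimpleGraph Matrix

lemma resistanceMatrix_symm {V : Type*} [Fintype V] [DecidableEq V]
    (G : SimpleGraph V) [DecidableRel G.Adj] (i j : V) :
    resistanceMatrix G i j = resistanceMatrix G j i := by
  set Γ := G.lapMatrix ℝ + Matrix.of fun _ _ => (1 : ℝ) / Fintype.card V with hΓ
  have hsym : Γᵀ = Γ := by
    ext a b
    simp [hΓ, Matrix.transpose_apply, lapMatrix, degMatrix, adjMatrix, adj_comm, Matrix.diagonal_apply]
    rcases eq_or_ne a b with h | h
    · subst h; rfl
    · simp [h, h.symm]
  have hinv : (Γ⁻¹)ᵀ = Γ⁻¹ := by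
    rw [Matrix.transpose_nonsing_inv, hsym]
  have key : Γ⁻¹ i j = Γ⁻¹ j i := by
    conv_lhs => rw [← hinv]
    rfl
  simp only [resistanceMatrix, Matrix.of_apply]
  rw [key]; ring

/-- Uniqueness in the minimax theorem: `α = 1/(∑ κ)` is the unique real number such
that for every probability measure `μ` on the vertices,
`min_a ∑ v, Ω a v · μ v ≤ α ≤ max_b ∑ v, Ω b v · μ v`. -/
theorem unique_minimax_value_of_nonneg_curvature
    {V : Type*} [Fintype V] [DecidableEq V]
    (G : SimpleGraph V) [DecidableRel G.Adj]
    (hconn : G.Connected) (hn : 2 ≤ Fintype.card V)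
    (κ : V → ℝ) (hκ : resistanceMatrix G *ᵥ κ = fun _ => 1)
    (hcurv : ∀ i, 0 ≤ κ i) (hsum : 0 < ∑ v, κ v)
    (hne : (Finset.univ : Finset V).Nonempty) :
    (∀ μ : V → ℝ, (∀ v, 0 ≤ μ v) → ∑ v, μ v = 1 →
        Finset.univ.inf' hne (fun a => ∑ v, resistanceMatrix G a v * μ v)
            ≤ (∑ v, κ v)⁻¹ ∧
        (∑ v, κ v)⁻¹
            ≤ Finset.univ.sup' hne (fun b => ∑ v, resistanceMatrix G b v * μ v)) ∧
    ∀ α : ℝ,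
      (∀ μ : V → ℝ, (∀ v, 0 ≤ μ v) → ∑ v, μ v = 1 →
        Finset.univ.inf' hne (fun a => ∑ v, resistanceMatrix G a v * μ v) ≤ α ∧
        α ≤ Finset.univ.sup' hne (fun b => ∑ v, resistanceMatrix G b v * μ v)) →
      α = (∑ v, κ v)⁻¹ := by
  set S := ∑ v, κ v with hS
  have hS0 : S ≠ 0 := ne_of_gt hsum
  have hΩκ : ∀ a, ∑ v, resistanceMatrix G a v * κ v = 1 := by
    intro a
    have := congrFun hκ a
    simpa [Matrix.mulVec, dotProduct] using this
  -- the measure μ* = κ / S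
  set μs : V → ℝ := fun v => κ v / S with hμs
  have hμs_nonneg : ∀ v, 0 ≤ μs v := fun v => div_nonneg (hcurv v) hsum.le
  have hμs_sum : ∑ v, μs v = 1 := by
    simp only [hμs]
    rw [← Finset.sum_div, ← hS, div_self hS0]
  have hμs_val : ∀ a, ∑ v, resistanceMatrix G a v * μs v = S⁻¹ := by
    intro a
    simp only [hμs, div_eq_mul_inv]
    calc ∑ v, resistanceMatrix G a v * (κ v * S⁻¹)
        = (∑ v, resistanceMatrix G a v * κ v) * S⁻¹ := by
          rw [Finset.sum_mul]; congr 1; ext v; ring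
      _ = S⁻¹ := by rw [hΩκ a, one_mul]
  constructor
  · intro μ hμ0 hμ1
    set f : V → ℝ := fun a => ∑ v, resistanceMatrix G a v * μ v with hf
    have hkey : ∑ a, μs a * f a = S⁻¹ := by
      have : ∑ a, μs a * f a = ∑ v, μ v * ∑ a, resistanceMatrix G a v * μs a := by
        simp only [hf, Finset.mul_sum, Finset.sum_mul]
        rw [Finset.sum_comm]
        congr 1; ext v; congr 1; ext a; ring
      rw [this]
      have h2 : ∀ v, ∑ a, resistanceMatrix G a v * μs a = S⁻¹ := by
        intro v
        rw [← hμs_val v]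
        congr 1; ext a; rw [resistanceMatrix_symm]
      simp only [h2]
      rw [← Finset.sum_mul, hμ1, one_mul]
    constructor
    · rw [← hkey]
      calc Finset.univ.inf' hne f = ∑ a, μs a * Finset.univ.inf' hne f := by
            rw [← Finset.sum_mul, hμs_sum, one_mul]
        _ ≤ ∑ a, μs a * f a := by
            apply Finset.sum_le_sum
            intro a _
            exact mul_le_mul_of_nonneg_left
              (Finset.inf'_le f (Finset.mem_univ a)) (hμs_nonneg a)
    · rw [← hkey]
      calc ∑ a, μs a * f a ≤ ∑ a, μs a * Finset.univ.sup' hne f := by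
            apply Finset.sum_le_sum
            intro a _
            exact mul_le_mul_of_nonneg_left
              (Finset.le_sup' f (Finset.mem_univ a)) (hμs_nonneg a)
        _ = Finset.univ.sup' hne f := by rw [← Finset.sum_mul, hμs_sum, one_mul]
  · intro α hα
    obtain ⟨h1, h2⟩ := hα μs hμs_nonneg hμs_sum
    have e : (fun a => ∑ v, resistanceMatrix G a v * μs v) = fun _ : V => S⁻¹ := by
      funext a; exact hμs_val a
    rw [e, Finset.inf'_const] at h1
    rw [e, Finset.sup'_const] at h2
    exact le_antisymm h2 h1
end

section
/- Let A ∈ ℝ^{n×n} be a symmetric matrix. There exists a unique real number α such that for every vector x ∈ ℝ^n with nonnegative entries summing to 1, one has min_{1≤i≤n} (Ax)_i ≤ α ≤ max_{1≤i≤n} (Ax)_i. -/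
/-!
Von Neumann's minimax theorem (here obtained from Sion's) gives mixed strategies `a`, `b` with
`(aᵀ A)_j ≤ (A b)_i` for all `i, j`. When `A` is symmetric, `aᵀ A = A a`, and
`α = max_j (A a)_j ≤ min_i (A b)_i` works: every probability vector `x` satisfies
`min (A x) ≤ aᵀ A x = xᵀ A a ≤ α` and `α ≤ xᵀ A b = bᵀ A x ≤ max (A x)`.
Any other admissible value `β` satisfies `β ≤ max (A a) = α` (take `x = a`) and
`α ≤ min (A b) ≤ β` (take `x = b`).
-/

open Finset Matrix

section StdSimplex

variable {ι : Type*} [Fintype ι] {x : ι → ℝ}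

theorem inf'_le_dotProduct_of_mem_stdSimplex (hne : (univ : Finset ι).Nonempty)
    (hx : x ∈ stdSimplex ℝ ι) (w : ι → ℝ) : univ.inf' hne w ≤ x ⬝ᵥ w :=
  calc univ.inf' hne w = ∑ i, x i * univ.inf' hne w := by rw [← sum_mul, hx.2, one_mul]
    _ ≤ x ⬝ᵥ w :=
        sum_le_sum fun i _ ↦ mul_le_mul_of_nonneg_left (inf'_le w (mem_univ i)) (hx.1 i)

theorem dotProduct_le_sup'_of_mem_stdSimplex (hne : (univ : Finset ι).Nonempty)
    (hx : x ∈ stdSimplex ℝ ι) (w : ι → ℝ) : x ⬝ᵥ w ≤ univ.sup' hne w :=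
  calc x ⬝ᵥ w ≤ ∑ i, x i * univ.sup' hne w :=
        sum_le_sum fun i _ ↦ mul_le_mul_of_nonneg_left (le_sup' w (mem_univ i)) (hx.1 i)
    _ = univ.sup' hne w := by rw [← sum_mul, hx.2, one_mul]

end StdSimplex

namespace Matrix

section IsSymm

variable {n α : Type*} [Fintype n] [CommSemiring α] {A : Matrix n n α}

theorem IsSymm.vecMul_eq_mulVec (hA : A.IsSymm) (v : n → α) : v ᵥ* A = A *ᵥ v := by
  conv_lhs => rw [← hA.eq]
  exact vecMul_transpose A v

theorem IsSymm.dotProduct_mulVec_comm (hA : A.IsSymm) (v w : n → α) :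
    v ⬝ᵥ A *ᵥ w = w ⬝ᵥ A *ᵥ v := by
  rw [dotProduct_mulVec, hA.vecMul_eq_mulVec, dotProduct_comm]

end IsSymm

theorem exists_vecMul_le_mulVec {m n : Type*} [Fintype m] [Fintype n] [Nonempty m]
    [Nonempty n] (A : Matrix m n ℝ) :
    ∃ a ∈ stdSimplex ℝ m, ∃ b ∈ stdSimplex ℝ n, ∀ i j, (a ᵥ* A) j ≤ (A *ᵥ b) i := by
  classical
  set f : (m → ℝ) →ₗ[ℝ] (n → ℝ) →ₗ[ℝ] ℝ := toLinearMap₂' ℝ A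
  obtain ⟨a, ha, b, hb, hab⟩ := Sion.exists_isSaddlePointOn (f := fun x y ↦ f x y)
    ⟨_, single_mem_stdSimplex ℝ (Classical.arbitrary m)⟩ (convex_stdSimplex ℝ m)
    (isCompact_stdSimplex ℝ m)
    (fun y _ ↦
      (f.flip y).continuous_of_finiteDimensional.lowerSemicontinuous.lowerSemicontinuousOn _)
    (fun y _ ↦ ((f.flip y).convexOn (convex_stdSimplex ℝ m)).quasiconvexOn)
    (convex_stdSimplex ℝ n) ⟨_, single_mem_stdSimplex ℝ (Classical.arbitrary n)⟩
    (isCompact_stdSimplex ℝ n)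
    (fun x _ ↦
      (f x).continuous_of_finiteDimensional.upperSemicontinuous.upperSemicontinuousOn _)
    (fun x _ ↦ ((f x).concaveOn (convex_stdSimplex ℝ n)).quasiconcaveOn)
  refine ⟨a, ha, b, hb, fun i j ↦ ?_⟩
  have : f a (Pi.single j 1) ≤ f (Pi.single i 1) b :=
    hab _ (single_mem_stdSimplex ℝ i) _ (single_mem_stdSimplex ℝ j)
  rwa [toLinearMap₂'_apply', toLinearMap₂'_apply', dotProduct_mulVec a, dotProduct_single,
    single_dotProduct, mul_one, one_mul] at this

end Matrix

theorem vonNeumann_minimax_symm_general (n : ℕ)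
    (A : Matrix (Fin n) (Fin n) ℝ) (hA : A.IsSymm)
    (hne : (Finset.univ : Finset (Fin n)).Nonempty) :
    ∃! α : ℝ, ∀ x : Fin n → ℝ, (∀ i, 0 ≤ x i) → ∑ i, x i = 1 →
      Finset.univ.inf' hne (fun i => (A *ᵥ x) i) ≤ α ∧
      α ≤ Finset.univ.sup' hne (fun i => (A *ᵥ x) i) := by
  have : Nonempty (Fin n) := univ_nonempty_iff.mp hne
  obtain ⟨a, ha, b, hb, hab⟩ := A.exists_vecMul_le_mulVec
  simp only [hA.vecMul_eq_mulVec] at hab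
  have hmax_le_min : univ.sup' hne (A *ᵥ a) ≤ univ.inf' hne (A *ᵥ b) :=
    sup'_le _ _ fun j _ ↦ le_inf' _ _ fun i _ ↦ hab i j
  refine ⟨univ.sup' hne (A *ᵥ a), fun x hx₀ hx₁ ↦ ?_, fun β hβ ↦ le_antisymm ?_ ?_⟩
  · have hx : x ∈ stdSimplex ℝ (Fin n) := ⟨hx₀, hx₁⟩
    constructor
    · calc univ.inf' hne (A *ᵥ x)
          ≤ a ⬝ᵥ A *ᵥ x := inf'_le_dotProduct_of_mem_stdSimplex hne ha _
        _ = x ⬝ᵥ A *ᵥ a := hA.dotProduct_mulVec_comm a x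
        _ ≤ univ.sup' hne (A *ᵥ a) := dotProduct_le_sup'_of_mem_stdSimplex hne hx _
    · calc univ.sup' hne (A *ᵥ a) ≤ univ.inf' hne (A *ᵥ b) := hmax_le_min
        _ ≤ x ⬝ᵥ A *ᵥ b := inf'_le_dotProduct_of_mem_stdSimplex hne hx _
        _ = b ⬝ᵥ A *ᵥ x := hA.dotProduct_mulVec_comm x b
        _ ≤ univ.sup' hne (A *ᵥ x) := dotProduct_le_sup'_of_mem_stdSimplex hne hb _
  · exact (hβ a ha.1 ha.2).2
  · exact hmax_le_min.trans (hβ b hb.1 hb.2).1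

/-- Von Neumann's minimax theorem for symmetric matrices: for a symmetric real matrix
`A` there is a unique `α ∈ ℝ` such that every probability vector `x` satisfies
`min_i (A x)_i ≤ α ≤ max_i (A x)_i`. -/
theorem vonNeumann_minimax_symm (n : ℕ) (hn : 1 ≤ n)
    (A : Matrix (Fin n) (Fin n) ℝ) (hA : A.IsSymm)
    (hne : (Finset.univ : Finset (Fin n)).Nonempty) :
    ∃! α : ℝ, ∀ x : Fin n → ℝ, (∀ i, 0 ≤ x i) → ∑ i, x i = 1 →
      Finset.univ.inf' hne (fun i => (A *ᵥ x) i) ≤ α ∧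
      α ≤ Finset.univ.sup' hne (fun i => (A *ᵥ x) i) :=
  vonNeumann_minimax_symm_general n A hA hne
end

section
/- For every integer n ≥ 2, one has Σ_{k=1}^{n−1} (sin(πk/n))^{−2} = (n²−1)/3. -/
/-!
Let `ζ = exp (2πi/n)` and, for `1 ≤ k < n`, `S k = ∑_{j<n} j ζ^{jk}`. Summing by parts,
`(ζ^k - 1) S k = n`, while `|ζ^k - 1| = 2 sin (πk/n)`; hence `sin (πk/n)⁻² = 4 |S k|² / n²`.
Parseval's identity for the discrete Fourier transform of `j ↦ j` gives
`∑_{k<n} |S k|² = n ∑_{j<n} j²`, and removing the term `|S 0|² = (∑_{j<n} j)²` leaves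
`n² (n² - 1) / 12`.
-/

open Finset Complex ComplexConjugate Real

theorem sub_one_mul_sum_range_natCast_mul_pow {R : Type*} [CommRing R] (w : R) (m : ℕ) :
    (w - 1) * ∑ j ∈ range m, (j : R) * w ^ j = m * w ^ m - w * ∑ j ∈ range m, w ^ j := by
  induction m with
  | zero => simp
  | succ m ih =>
    rw [sum_range_succ, mul_add, ih, sum_range_succ]
    push_cast
    ring

theorem sub_one_mul_sum_range_natCast_mul_pow_of_pow_eq_one {R : Type*} [CommRing R] [IsDomain R]
    {w : R} {n : ℕ} (hw : w ^ n = 1) (hw1 : w ≠ 1) :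
    (w - 1) * ∑ j ∈ range n, (j : R) * w ^ j = n := by
  have hgeom : ∑ j ∈ range n, w ^ j = 0 := by
    have := geom_sum_mul w n
    rw [hw, sub_self] at this
    exact (mul_eq_zero.mp this).resolve_right (sub_ne_zero.mpr hw1)
  rw [sub_one_mul_sum_range_natCast_mul_pow, hw, hgeom]
  ring

theorem sum_range_natCast {R : Type*} [Field R] [CharZero R] (n : ℕ) :
    ∑ j ∈ range n, (j : R) = n * (n - 1) / 2 := by
  induction n with
  | zero => simp
  | succ m ih => rw [sum_range_succ, ih]; push_cast; ring

theorem sum_range_natCast_sq {R : Type*} [Field R] [CharZero R] (n : ℕ) :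
    ∑ j ∈ range n, (j : R) ^ 2 = n * (n - 1) * (2 * n - 1) / 6 := by
  induction n with
  | zero => simp
  | succ m ih => rw [sum_range_succ, ih]; push_cast; ring

namespace IsPrimitiveRoot

theorem sum_range_pow_div_pow_pow {K : Type*} [Field K] {ζ : K} {n : ℕ}
    (hζ : IsPrimitiveRoot ζ n) {j l : ℕ} (hj : j < n) (hl : l < n) :
    ∑ k ∈ range n, (ζ ^ j / ζ ^ l) ^ k = if j = l then (n : K) else 0 := by
  have hζ0 : ζ ≠ 0 := hζ.ne_zero (by omega)
  split_ifs with h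
  · simp [h, hζ0]
  · have hne : ζ ^ j / ζ ^ l ≠ 1 := fun h1 =>
      h (hζ.pow_inj hj hl ((div_eq_one_iff_eq (pow_ne_zero _ hζ0)).mp h1))
    rw [geom_sum_eq hne, div_pow, ← pow_mul, ← pow_mul, mul_comm j, mul_comm l, pow_mul, pow_mul,
      hζ.pow_eq_one, one_pow, one_pow, div_one, sub_self, zero_div]

theorem sum_sq_norm_sum_mul_pow {ζ : ℂ} {n : ℕ} (hζ : IsPrimitiveRoot ζ n) (f : ℕ → ℂ) :
    ∑ k ∈ range n, ‖∑ j ∈ range n, f j * (ζ ^ k) ^ j‖ ^ 2 = n * ∑ j ∈ range n, ‖f j‖ ^ 2 := by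
  obtain rfl | hn := eq_or_ne n 0
  · simp
  have hconj : conj ζ = ζ⁻¹ := (inv_eq_conj (hζ.norm'_eq_one hn)).symm
  apply ofReal_injective
  push_cast
  calc ∑ k ∈ range n, (‖∑ j ∈ range n, f j * (ζ ^ k) ^ j‖ : ℂ) ^ 2
      = ∑ k ∈ range n, ∑ j ∈ range n, ∑ l ∈ range n, f j * conj (f l) * (ζ ^ j / ζ ^ l) ^ k := by
        refine sum_congr rfl fun k _ => ?_
        rw [← mul_conj', map_sum, sum_mul_sum]
        refine sum_congr rfl fun j _ => sum_congr rfl fun l _ => ?_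
        rw [map_mul, map_pow, map_pow, hconj]
        ring
    _ = ∑ j ∈ range n, ∑ l ∈ range n, f j * conj (f l) * ∑ k ∈ range n, (ζ ^ j / ζ ^ l) ^ k := by
        rw [sum_comm]
        refine sum_congr rfl fun j _ => ?_
        rw [sum_comm]
        simp only [mul_sum]
    _ = ∑ j ∈ range n, f j * conj (f j) * n := by
        refine sum_congr rfl fun j hj => ?_
        rw [sum_congr rfl fun l hl => by
          rw [hζ.sum_range_pow_div_pow_pow (mem_range.mp hj) (mem_range.mp hl), mul_ite, mul_zero]]
        rw [sum_ite_eq, if_pos hj]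
    _ = n * ∑ j ∈ range n, (‖f j‖ : ℂ) ^ 2 := by
        rw [mul_sum]
        simp only [mul_conj', mul_comm]

end IsPrimitiveRoot

theorem Complex.norm_exp_two_pi_I_div_pow_sub_one (n k : ℕ) :
    ‖exp (2 * π * I / n) ^ k - 1‖ = 2 * |Real.sin (π * k / n)| := by
  rw [← exp_nat_mul, show (k : ℂ) * (2 * π * I / n) = I * ((2 * π * k / n : ℝ) : ℂ) by
    push_cast; ring, norm_exp_I_mul_ofReal_sub_one, norm_mul, Real.norm_two, Real.norm_eq_abs]
  ring_nf

theorem sin_pi_mul_div_zpow_neg_two {n k : ℕ} (hk : 1 ≤ k) (hkn : k < n) :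
    Real.sin (π * k / n) ^ (-2 : ℤ) =
      4 / n ^ 2 * ‖∑ j ∈ range n, (j : ℂ) * (exp (2 * π * I / n) ^ k) ^ j‖ ^ 2 := by
  have hn : n ≠ 0 := by omega
  have hζ := isPrimitiveRoot_exp n hn
  set w := exp (2 * π * I / n) ^ k
  have hw : w ^ n = 1 := by rw [← pow_mul, mul_comm k n, pow_mul, hζ.pow_eq_one, one_pow]
  have hw1 : w ≠ 1 := fun h => by
    have := Nat.le_of_dvd (by omega) ((hζ.pow_eq_one_iff_dvd k).mp h)
    omega
  have hsin : 0 < Real.sin (π * k / n) := by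
    apply sin_pos_of_pos_of_lt_pi (by positivity)
    rw [div_lt_iff₀ (by positivity)]
    exact mul_lt_mul_of_pos_left (by exact_mod_cast hkn) pi_pos
  have hprod := congrArg norm (sub_one_mul_sum_range_natCast_mul_pow_of_pow_eq_one hw hw1)
  rw [norm_mul, norm_exp_two_pi_I_div_pow_sub_one, abs_of_pos hsin, Complex.norm_natCast] at hprod
  rw [eq_div_of_mul_eq (by positivity) ((mul_comm _ _).trans hprod), zpow_neg, zpow_two]
  field_simp
  ring

/-- For every integer `n ≥ 2`, `∑_{k=1}^{n-1} (sin (π k / n))⁻² = (n² - 1)/3`. -/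
theorem sum_inv_sq_sin (n : ℕ) (hn : 2 ≤ n) :
    ∑ k ∈ Finset.Ico 1 n, (Real.sin (Real.pi * k / n)) ^ (-2 : ℤ) =
      ((n : ℝ) ^ 2 - 1) / 3 := by
  have hparseval := (isPrimitiveRoot_exp n (by omega)).sum_sq_norm_sum_mul_pow (fun j => (j : ℂ))
  rw [sum_range_eq_add_Ico _ (by omega)] at hparseval
  simp only [pow_zero, one_pow, mul_one, Complex.norm_natCast] at hparseval
  rw [← Nat.cast_sum, Complex.norm_natCast, Nat.cast_sum, sum_range_natCast, sum_range_natCast_sq]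
    at hparseval
  rw [sum_congr rfl fun k hk => sin_pi_mul_div_zpow_neg_two (mem_Ico.mp hk).1 (mem_Ico.mp hk).2,
    ← mul_sum, eq_sub_of_add_eq' hparseval]
  field_simp
  ring
end
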